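/- arXiv:2008.00845 — 3 statements merged into one kernel-verified Lean document; each statement's English description precedes it below -/
import Mathlib

section
/- Let μ be a Borel probability measure on the closed unit disk, b ∈ ℓ¹(ℕ), and suppose |∫ f_b dμ| = sup_{|z|≤1} |f_b(z)|, where f_b is the continuous function given by the power series with coefficients b, and f_b is non-constant. Then μ is supported on the unit circle, and there exists β ∈ ℂ with |β| = sup_{|z|≤1} |f_b(z)| ≠ 0 such that f_b(t) = β for μ-almost every t (equivalently for all t in the support of μ). -/
/-!
An ℓ¹ power series `f` is continuous on the closed unit disk, holomorphic inside, and bounded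
there by `M`. Since `‖f‖ ≤ M` `μ`-a.e. and `‖∫ f dμ‖ = M`, the equality case of the triangle
inequality in the strictly convex space `ℂ` forces `f = ∫ f dμ` `μ`-a.e., hence `‖f‖ = M`
`μ`-a.e. As `f` is not constant, the maximum modulus principle gives `‖f‖ < M` on the open disk,
which is therefore `μ`-null; and `M > 0` because `‖f 0‖ < M`.
-/

open MeasureTheory Metric Set

section StrictConvexIntegral

variable {α E : Type*} [MeasurableSpace α] {μ : Measure α} [IsProbabilityMeasure μ]
  [NormedAddCommGroup E] [NormedSpace ℝ E] [CompleteSpace E] [StrictConvexSpace ℝ E]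
  {f : α → E} {C : ℝ}

theorem ae_eq_integral_of_norm_integral_eq (h_le : ∀ᵐ x ∂μ, ‖f x‖ ≤ C)
    (h_eq : ‖∫ x, f x ∂μ‖ = C) : f =ᵐ[μ] Function.const α (∫ x, f x ∂μ) := by
  rw [← average_eq_integral]
  refine (ae_eq_const_or_norm_integral_lt_of_norm_le_const h_le).resolve_right ?_
  simp [h_eq]

end StrictConvexIntegral

section MaximumModulus

variable {E F : Type*} [NormedAddCommGroup E] [NormedSpace ℂ E] [NormedAddCommGroup F]
  [NormedSpace ℂ F] [StrictConvexSpace ℝ F] {f : E → F} {U : Set E} {M : ℝ}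

theorem Complex.norm_lt_of_isPreconnected_of_norm_le (hc : IsPreconnected U) (ho : IsOpen U)
    (hd : DifferentiableOn ℂ f U) (hle : ∀ z ∈ U, ‖f z‖ ≤ M)
    (hnc : ∃ z ∈ U, ∃ w ∈ U, f z ≠ f w) {z : E} (hz : z ∈ U) : ‖f z‖ < M := by
  refine (hle z hz).lt_of_ne fun hzM => ?_
  obtain ⟨z₁, hz₁, z₂, hz₂, hne⟩ := hnc
  have hmax : IsMaxOn (norm ∘ f) U z := fun w hw => by simpa [hzM] using hle w hw
  have hconst := Complex.eqOn_of_isPreconnected_of_isMaxOn_norm hc ho hd hz hmax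
  exact hne ((hconst hz₁).trans (hconst hz₂).symm)

end MaximumModulus

theorem IsCompact.norm_le_iSup_of_continuousOn {X F : Type*} [TopologicalSpace X]
    [SeminormedAddCommGroup F] {s : Set X} {f : X → F} (hs : IsCompact s)
    (hf : ContinuousOn f s) {x : X} (hx : x ∈ s) : ‖f x‖ ≤ ⨆ y : s, ‖f y‖ := by
  have hbdd : BddAbove (range fun y : s => ‖f y‖) := by
    simpa only [image_eq_range] using (hs.image_of_continuousOn hf.norm).bddAbove
  exact le_ciSup hbdd (⟨x, hx⟩ : s)

theorem diffContOnCl_tsum_mul_pow {b : ℕ → ℂ} (hb : Summable fun n => ‖b n‖) :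
    DiffContOnCl ℂ (fun z => ∑' n, b n * z ^ n) (ball 0 1) := by
  have hterm (n : ℕ) (z : ℂ) (hz : z ∈ closedBall 0 1) : ‖b n * z ^ n‖ ≤ ‖b n‖ := by
    rw [norm_mul, norm_pow]
    exact mul_le_of_le_one_right (norm_nonneg _)
      (pow_le_one₀ (norm_nonneg _) (mem_closedBall_zero_iff.mp hz))
  refine ⟨?_, ?_⟩
  · exact Complex.differentiableOn_tsum_of_summable_norm hb
      (fun n => ((differentiable_const _).mul (differentiable_pow n)).differentiableOn)
      isOpen_ball fun n z hz => hterm n z (ball_subset_closedBall hz)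
  · rw [closure_ball 0 one_ne_zero]
    exact continuousOn_tsum (fun n => continuousOn_const.mul (continuousOn_pow n)) hb hterm

/-- If a probability measure `μ` on the closed unit disk satisfies
`|∫ f_b dμ| = sup_{|z|≤1} |f_b|` for a non-constant `f_b` with `b ∈ ℓ¹`, then `μ` is
supported on the unit circle and `f_b` is a.e. equal to a constant `β` of maximal modulus. -/
theorem stmt7 (μ : Measure ℂ) [IsProbabilityMeasure μ]
    (hμ : μ (Metric.closedBall 0 1)ᶜ = 0)
    (b : ℕ → ℂ) (hb : Summable fun n => ‖b n‖)
    (f : ℂ → ℂ) (hf : ∀ z, f z = ∑' n : ℕ, b n * z ^ n)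
    (hnc : ∃ z w : ℂ, ‖z‖ < 1 ∧ ‖w‖ < 1 ∧ f z ≠ f w)
    (M : ℝ) (hM : M = ⨆ z : Metric.closedBall (0 : ℂ) 1, ‖f z‖)
    (hatt : ‖∫ z, f z ∂μ‖ = M) :
    (∀ᵐ t ∂μ, ‖t‖ = 1) ∧
    ∃ β : ℂ, ‖β‖ = M ∧ β ≠ 0 ∧ ∀ᵐ t ∂μ, f t = β := by
  have hd : DiffContOnCl ℂ f (ball 0 1) := funext hf ▸ diffContOnCl_tsum_mul_pow hb
  have hcont : ContinuousOn f (closedBall 0 1) := closure_ball (0 : ℂ) one_ne_zero ▸ hd.2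
  have hle (z : ℂ) (hz : z ∈ closedBall 0 1) : ‖f z‖ ≤ M :=
    hM ▸ (isCompact_closedBall 0 1).norm_le_iSup_of_continuousOn hcont hz
  have hlt (z : ℂ) (hz : z ∈ ball 0 1) : ‖f z‖ < M := by
    obtain ⟨z₁, z₂, hz₁, hz₂, hne⟩ := hnc
    refine Complex.norm_lt_of_isPreconnected_of_norm_le (convex_ball 0 1).isPreconnected
      isOpen_ball hd.1 (fun w hw => hle w (ball_subset_closedBall hw)) ?_ hz
    exact ⟨z₁, mem_ball_zero_iff.mpr hz₁, z₂, mem_ball_zero_iff.mpr hz₂, hne⟩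
  have hMpos : 0 < M := (norm_nonneg _).trans_lt (hlt 0 (mem_ball_self one_pos))
  have hdisk : ∀ᵐ t ∂μ, t ∈ closedBall (0 : ℂ) 1 := ae_iff.mpr hμ
  have hconst := ae_eq_integral_of_norm_integral_eq (hdisk.mono hle) hatt
  refine ⟨?_, ∫ z, f z ∂μ, hatt, norm_pos_iff.mp (hatt ▸ hMpos), hconst⟩
  filter_upwards [hconst, hdisk] with t hft ht
  refine (mem_closedBall_zero_iff.mp ht).eq_of_not_lt fun ht₁ => ?_
  exact (hlt t (mem_ball_zero_iff.mpr ht₁)).ne (by rw [hft, Function.const_apply, hatt])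
end

section
/- (Bernstein) If f is analytic on the open unit disk, continuous on the closed disk, and its boundary values satisfy a Hölder condition of order α > 1/2 (|f(z) − f(w)| ≤ C|z − w|^α for z, w on the closed disk), then the Taylor coefficients of f are absolutely summable, i.e., f belongs to the Wiener algebra W⁺. -/
/-!
For a rotation `u = exp (I t)`, the function `z ↦ f (u z) - f z` has Taylor coefficients
`a n (u ^ n - 1)` and is bounded by `C t ^ α` on the disk, so Parseval's identity on circles of
radius `r < 1` gives `∑ ‖a n‖ ^ 2 ‖u ^ n - 1‖ ^ 2 ≤ (C t ^ α) ^ 2`. With `t = π / 2 ^ (m + 1)` the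
factor `‖u ^ n - 1‖` is at least `1` on the dyadic block `2 ^ m ≤ n < 2 ^ (m + 1)`, so the block has
`ℓ²` mass `O(4 ^ (-m α))`. By Cauchy–Schwarz its `ℓ¹` mass is `O(2 ^ (m (1/2 - α)))`, which is
summable over `m` exactly when `α > 1/2`.
-/

open Complex Filter Finset Metric Topology
open scoped Real NNReal ENNReal

theorem sum_range_sq_norm_le_sq_of_norm_sum_le {c : ℕ → ℂ} {M : ℕ} {A : ℝ}
    (hA : ∀ w ∈ sphere (0 : ℂ) 1, ‖∑ n ∈ range M, c n * w ^ n‖ ≤ A) :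
    ∑ n ∈ range M, ‖c n‖ ^ 2 ≤ A ^ 2 := by
  set P : Polynomial ℂ := ∑ n ∈ range M, Polynomial.C (c n) * Polynomial.X ^ n
  have hcoeff (n : ℕ) : P.coeff n = if n < M then c n else 0 := by
    simp [P, Polynomial.finsetSum_coeff]
  have hsupp : P.support ⊆ range M := fun n hn => by
    by_contra h
    simp_all
  calc ∑ n ∈ range M, ‖c n‖ ^ 2 = ∑ n ∈ range M, ‖P.coeff n‖ ^ 2 :=
        sum_congr rfl fun n hn => by rw [hcoeff, if_pos (mem_range.1 hn)]
    _ = ∑ n ∈ P.support, ‖P.coeff n‖ ^ 2 :=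
        (sum_subset hsupp fun n _ hn => by simp_all).symm
    _ = Real.circleAverage (fun w => ‖P.eval w‖ ^ 2) 0 1 := P.sum_sq_norm_coeff_eq_circleAverage
    _ ≤ A ^ 2 := by
        refine Real.circleAverage_mono_on_of_le_circle
          ((P.continuous.norm.pow 2).continuousOn.circleIntegrable zero_le_one) fun w hw => ?_
        rw [abs_one] at hw
        simpa [P, Polynomial.eval_finsetSum] using pow_le_pow_left₀ (norm_nonneg _) (hA w hw) 2

theorem sum_range_sq_norm_le_sq_of_norm_tsum_le {c : ℕ → ℂ} {B : ℝ}
    (hc : Summable fun n => ‖c n‖)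
    (hB : ∀ w ∈ sphere (0 : ℂ) 1, ‖∑' n, c n * w ^ n‖ ≤ B) (N : ℕ) :
    ∑ n ∈ range N, ‖c n‖ ^ 2 ≤ B ^ 2 := by
  set tail : ℕ → ℝ := fun M => ∑' i, ‖c (i + M)‖
  have htail : Tendsto (fun M => (B + tail M) ^ 2) atTop (𝓝 (B ^ 2)) := by
    simpa using ((tendsto_sum_nat_add fun n => ‖c n‖).const_add B).pow 2
  have hpartial (M : ℕ) : ∑ n ∈ range M, ‖c n‖ ^ 2 ≤ (B + tail M) ^ 2 := by
    refine sum_range_sq_norm_le_sq_of_norm_sum_le fun w hw => ?_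
    have hnorm (n : ℕ) : ‖c n * w ^ n‖ = ‖c n‖ := by
      rw [norm_mul, norm_pow, mem_sphere_zero_iff_norm.1 hw, one_pow, mul_one]
    have hsum : Summable fun n => c n * w ^ n := .of_norm (by simpa only [hnorm] using hc)
    rw [eq_sub_of_add_eq (hsum.sum_add_tsum_nat_add M)]
    refine (norm_sub_le _ _).trans (add_le_add (hB w hw) ?_)
    refine (norm_tsum_le_tsum_norm ?_).trans_eq (tsum_congr fun i => hnorm (i + M))
    simpa only [hnorm] using (summable_nat_add_iff M).2 hc
  refine ge_of_tendsto htail (eventually_atTop.2 ⟨N, fun M hM => ?_⟩)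
  exact (sum_le_sum_of_subset_of_nonneg (range_subset_range.2 hM) fun _ _ _ => by positivity).trans
    (hpartial M)

theorem summable_norm_mul_pow_of_forall_summable {a : ℕ → ℂ}
    (ha : ∀ z ∈ ball (0 : ℂ) 1, Summable fun n => a n * z ^ n) {r : ℝ} (hr0 : 0 ≤ r)
    (hr1 : r < 1) : Summable fun n => ‖a n‖ * r ^ n := by
  obtain ⟨s, hrs, hs1⟩ := exists_between hr1
  have hs0 : 0 < s := hr0.trans_lt hrs
  have hs_mem : (s : ℂ) ∈ ball (0 : ℂ) 1 := by
    rwa [mem_ball_zero_iff, norm_real, Real.norm_of_nonneg hs0.le]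
  have hbdd : ∀ᶠ n in atTop, ‖a n * (s : ℂ) ^ n‖ < 1 := by
    simpa using (tendsto_order.1 (ha s hs_mem).tendsto_atTop_zero.norm).2 1 (by simp)
  refine .of_norm_bounded_eventually_nat (g := fun n => (r / s) ^ n)
    (summable_geometric_of_lt_one (by positivity) ((div_lt_one hs0).2 hrs)) ?_
  filter_upwards [hbdd] with n hn
  rw [norm_mul, norm_pow, norm_real, Real.norm_of_nonneg hs0.le] at hn
  calc ‖‖a n‖ * r ^ n‖ = ‖a n‖ * s ^ n * (r / s) ^ n := by
        rw [Real.norm_of_nonneg (by positivity), div_pow, mul_assoc,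
          mul_div_cancel₀ _ (pow_pos hs0 n).ne']
    _ ≤ (r / s) ^ n := mul_le_of_le_one_left (by positivity) hn.le

theorem sum_range_sq_norm_le_sq_of_forall_hasSum {a : ℕ → ℂ} {g : ℂ → ℂ} {B : ℝ}
    (hg : ∀ z ∈ ball (0 : ℂ) 1, HasSum (fun n => a n * z ^ n) (g z))
    (hB : ∀ z ∈ ball (0 : ℂ) 1, ‖g z‖ ≤ B) (N : ℕ) :
    ∑ n ∈ range N, ‖a n‖ ^ 2 ≤ B ^ 2 := by
  have hradial : ∀ r ∈ Set.Ico (0 : ℝ) 1, ∑ n ∈ range N, ‖a n‖ ^ 2 * (r ^ 2) ^ n ≤ B ^ 2 := by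
    rintro r ⟨hr0, hr1⟩
    have hcoeff (n : ℕ) : ‖a n * (r : ℂ) ^ n‖ = ‖a n‖ * r ^ n := by
      rw [norm_mul, norm_pow, norm_real, Real.norm_of_nonneg hr0]
    have hsum := summable_norm_mul_pow_of_forall_summable (fun z hz => (hg z hz).summable) hr0 hr1
    convert sum_range_sq_norm_le_sq_of_norm_tsum_le (c := fun n => a n * (r : ℂ) ^ n)
      (by simpa only [hcoeff] using hsum) (fun w hw => ?_) N using 2 with n
    · rw [hcoeff, mul_pow, ← pow_mul, ← pow_mul, mul_comm n]
    · have hrw : (r : ℂ) * w ∈ ball (0 : ℂ) 1 := by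
        rw [mem_ball_zero_iff, norm_mul, norm_real, Real.norm_of_nonneg hr0,
          mem_sphere_zero_iff_norm.1 hw, mul_one]
        exact hr1
      simp_rw [mul_assoc, ← mul_pow]
      exact (hg _ hrw).tsum_eq ▸ hB _ hrw
  have hcont : Tendsto (fun r : ℝ => ∑ n ∈ range N, ‖a n‖ ^ 2 * (r ^ 2) ^ n) (𝓝[<] 1)
      (𝓝 (∑ n ∈ range N, ‖a n‖ ^ 2 * ((1 : ℝ) ^ 2) ^ n)) :=
    ((continuous_finsetSum _ fun n _ => by fun_prop).tendsto 1).mono_left nhdsWithin_le_nhds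
  simpa using le_of_tendsto hcont
    (eventually_of_mem (Ico_mem_nhdsLT zero_lt_one) hradial)

theorem sum_range_sq_norm_mul_sq_norm_pow_sub_one_le {a : ℕ → ℂ} {f : ℂ → ℂ} {u : ℂ}
    (hu : ‖u‖ ≤ 1) {B : ℝ} (hf : ∀ z ∈ ball (0 : ℂ) 1, HasSum (fun n => a n * z ^ n) (f z))
    (hB : ∀ z ∈ ball (0 : ℂ) 1, ‖f (u * z) - f z‖ ≤ B) (N : ℕ) :
    ∑ n ∈ range N, ‖a n‖ ^ 2 * ‖u ^ n - 1‖ ^ 2 ≤ B ^ 2 := by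
  have hrot : ∀ z ∈ ball (0 : ℂ) 1,
      HasSum (fun n => a n * (u ^ n - 1) * z ^ n) (f (u * z) - f z) := by
    intro z hz
    have huz : u * z ∈ ball (0 : ℂ) 1 := by
      rw [mem_ball_zero_iff] at hz ⊢
      rw [norm_mul]
      exact (mul_le_of_le_one_left (norm_nonneg z) hu).trans_lt hz
    exact ((hf _ huz).sub (hf z hz)).congr_fun fun n => by ring
  simpa only [norm_mul, mul_pow] using sum_range_sq_norm_le_sq_of_forall_hasSum hrot hB N

theorem one_le_norm_exp_I_mul_sub_one {x : ℝ} (hx₁ : π / 2 ≤ x) (hx₂ : x ≤ π) :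
    1 ≤ ‖exp (I * x) - 1‖ := by
  rw [norm_exp_I_mul_ofReal_sub_one, Real.norm_eq_abs]
  have hsin := Real.mul_le_sin (x := x / 2) (by linarith [Real.pi_pos]) (by linarith)
  have : 1 / 2 ≤ 2 / π * (x / 2) := by
    rw [div_mul_div_comm, le_div_iff₀ (by positivity)]
    linarith
  linarith [le_abs_self (2 * Real.sin (x / 2))]

theorem sum_Ico_two_pow_sq_norm_le_of_holder {a : ℕ → ℂ} {f : ℂ → ℂ} {α C : ℝ} (hα : 0 ≤ α)
    (hC : 0 ≤ C) (hf : ∀ z ∈ ball (0 : ℂ) 1, HasSum (fun n => a n * z ^ n) (f z))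
    (hHolder : ∀ z ∈ ball (0 : ℂ) 1, ∀ w ∈ ball (0 : ℂ) 1, ‖f z - f w‖ ≤ C * ‖z - w‖ ^ α)
    (m : ℕ) :
    ∑ n ∈ Ico (2 ^ m) (2 ^ (m + 1)), ‖a n‖ ^ 2 ≤ (C * (π / 2 ^ (m + 1)) ^ α) ^ 2 := by
  set t : ℝ := π / 2 ^ (m + 1)
  set u : ℂ := exp (I * t)
  have ht : 0 ≤ t := by positivity
  have hu : ‖u‖ = 1 := norm_exp_I_mul_ofReal t
  have hB : ∀ z ∈ ball (0 : ℂ) 1, ‖f (u * z) - f z‖ ≤ C * t ^ α := by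
    intro z hz
    have huz : u * z ∈ ball (0 : ℂ) 1 := by
      rw [mem_ball_zero_iff, norm_mul, hu, one_mul]
      exact mem_ball_zero_iff.1 hz
    refine (hHolder _ huz z hz).trans ?_
    gcongr
    calc ‖u * z - z‖ = ‖z‖ * ‖u - 1‖ := by rw [← norm_mul]; ring_nf
      _ ≤ 1 * ‖t‖ := by
          gcongr
          · exact (mem_ball_zero_iff.1 hz).le
          · exact Real.norm_exp_I_mul_ofReal_sub_one_le
      _ = t := by rw [one_mul, Real.norm_of_nonneg ht]
  have hsub : Ico (2 ^ m) (2 ^ (m + 1)) ⊆ range (2 ^ (m + 1)) :=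
    fun n hn => mem_range.2 (mem_Ico.1 hn).2
  calc ∑ n ∈ Ico (2 ^ m) (2 ^ (m + 1)), ‖a n‖ ^ 2
      ≤ ∑ n ∈ Ico (2 ^ m) (2 ^ (m + 1)), ‖a n‖ ^ 2 * ‖u ^ n - 1‖ ^ 2 := by
        refine sum_le_sum fun n hn => le_mul_of_one_le_right (by positivity) ?_
        obtain ⟨hn₁, hn₂⟩ := mem_Ico.1 hn
        have h2m : (0 : ℝ) < 2 ^ m := by positivity
        have hn₁' : (2 : ℝ) ^ m ≤ n := by exact_mod_cast hn₁
        have hn₂' : (n : ℝ) < 2 ^ m * 2 := by exact_mod_cast pow_succ 2 m ▸ hn₂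
        have hnt : n * t = n * π / (2 ^ m * 2) := by rw [← pow_succ]; ring
        have hnt₁ : π / 2 ≤ n * t := by
          rw [hnt, le_div_iff₀ (by positivity)]
          nlinarith [Real.pi_pos]
        have hnt₂ : n * t ≤ π := by
          rw [hnt, div_le_iff₀ (by positivity)]
          nlinarith [Real.pi_pos]
        rw [← exp_nat_mul, ← mul_assoc, mul_comm (n : ℂ), mul_assoc]
        exact one_le_pow₀ (by exact_mod_cast one_le_norm_exp_I_mul_sub_one hnt₁ hnt₂)
    _ ≤ ∑ n ∈ range (2 ^ (m + 1)), ‖a n‖ ^ 2 * ‖u ^ n - 1‖ ^ 2 :=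
        sum_le_sum_of_subset_of_nonneg hsub fun _ _ _ => by positivity
    _ ≤ (C * t ^ α) ^ 2 := sum_range_sq_norm_mul_sq_norm_pow_sub_one_le hu.le hf hB _

theorem summable_of_sum_Ico_two_pow_le {x : ℕ → ℝ} (hx : ∀ n, 0 ≤ x n) {K q : ℝ} (hq0 : 0 ≤ q)
    (hq1 : q < 1) (hblock : ∀ m, ∑ n ∈ Ico (2 ^ m) (2 ^ (m + 1)), x n ≤ K * q ^ m) :
    Summable x := by
  have hK : 0 ≤ K := by simpa using (hx 1).trans (by simpa using hblock 0)
  have hdyadic (M : ℕ) : ∑ n ∈ range (2 ^ M), x n ≤ x 0 + K * ∑ m ∈ range M, q ^ m := by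
    induction M with
    | zero => simp
    | succ M ih =>
      rw [← sum_range_add_sum_Ico _ (Nat.pow_le_pow_right two_pos M.le_succ), sum_range_succ,
        mul_add, ← add_assoc]
      exact add_le_add ih (hblock M)
  refine summable_of_sum_range_le hx (c := x 0 + K / (1 - q)) fun N => ?_
  calc ∑ n ∈ range N, x n ≤ ∑ n ∈ range (2 ^ N), x n :=
        sum_le_sum_of_subset_of_nonneg (range_subset_range.2 Nat.lt_two_pow_self.le)
          fun n _ _ => hx n
    _ ≤ x 0 + K * ∑ m ∈ range N, q ^ m := hdyadic N
    _ ≤ x 0 + K / (1 - q) := by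
        rw [range_eq_Ico, div_eq_mul_one_div K]
        gcongr
        simpa using geom_sum_Ico_le_of_lt_one hq0 hq1 (m := 0) (n := N)

theorem summable_of_sum_Ico_two_pow_sq_le {x : ℕ → ℝ} (hx : ∀ n, 0 ≤ x n) {K ρ : ℝ}
    (hρ0 : 0 ≤ ρ) (hρ : 2 * ρ < 1)
    (hblock : ∀ m, ∑ n ∈ Ico (2 ^ m) (2 ^ (m + 1)), x n ^ 2 ≤ K * ρ ^ m) :
    Summable x := by
  have hK : 0 ≤ K := by
    simpa using (sum_nonneg fun n _ => sq_nonneg (x n)).trans (hblock 0)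
  refine summable_of_sum_Ico_two_pow_le hx (K := √K) (Real.sqrt_nonneg _)
    ((Real.sqrt_lt' one_pos).2 (by simpa using hρ)) fun m => ?_
  have hcard : (#(Ico (2 ^ m) (2 ^ (m + 1))) : ℝ) = 2 ^ m := by
    rw [Nat.card_Ico, pow_succ, Nat.mul_two, Nat.add_sub_cancel]
    push_cast
    ring
  rw [← pow_le_pow_iff_left₀ (sum_nonneg fun n _ => hx n) (by positivity) two_ne_zero,
    mul_pow, ← pow_mul, mul_comm m, pow_mul, Real.sq_sqrt hK,
    Real.sq_sqrt (by positivity), mul_pow, mul_left_comm]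
  calc (∑ n ∈ Ico (2 ^ m) (2 ^ (m + 1)), x n) ^ 2
      ≤ 2 ^ m * ∑ n ∈ Ico (2 ^ m) (2 ^ (m + 1)), x n ^ 2 := hcard ▸ sq_sum_le_card_mul_sum_sq
    _ ≤ 2 ^ m * (K * ρ ^ m) := by gcongr; exact hblock m

theorem HasFPowerSeriesOnBall.hasSum_coeff_mul_pow {𝕜 : Type*} [NontriviallyNormedField 𝕜]
    {f : 𝕜 → 𝕜} {p : FormalMultilinearSeries 𝕜 𝕜 𝕜} {r : ℝ≥0∞}
    (hf : HasFPowerSeriesOnBall f p 0 r) {z : 𝕜} (hz : ‖z‖ₑ < r) :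
    HasSum (fun n => p.coeff n * z ^ n) (f z) := by
  simpa [mul_comm] using hf.hasSum (mem_eball_zero_iff.2 hz)

theorem stmt14_general (f : ℂ → ℂ) (α C : ℝ) (hα : 1 / 2 < α)
    (hd : DifferentiableOn ℂ f (Metric.ball 0 1))
    (hc : ContinuousOn f (Metric.closedBall 0 1))
    (hHolder : ∀ z ∈ Metric.closedBall (0 : ℂ) 1, ∀ w ∈ Metric.closedBall (0 : ℂ) 1,
      ‖f z - f w‖ ≤ C * ‖z - w‖ ^ α) :
    ∃ a : ℕ → ℂ, Summable (fun n => ‖a n‖) ∧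
      ∀ z ∈ Metric.ball (0 : ℂ) 1, f z = ∑' n : ℕ, a n * z ^ n := by
  have hps : HasFPowerSeriesOnBall f (cauchyPowerSeries f 0 1) 0 1 :=
    hasFPowerSeriesOnBall_of_differentiable_off_countable (R := 1) Set.countable_empty
      (by rwa [NNReal.coe_one]) (fun z hz => hd.differentiableAt (isOpen_ball.mem_nhds
        (by simpa using hz.1))) one_pos
  set a : ℕ → ℂ := (cauchyPowerSeries f 0 1).coeff
  have hf (z : ℂ) (hz : z ∈ ball (0 : ℂ) 1) : HasSum (fun n => a n * z ^ n) (f z) :=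
    hps.hasSum_coeff_mul_pow (by rwa [← ofReal_norm, ENNReal.ofReal_lt_one, ← mem_ball_zero_iff])
  have hC : 0 ≤ C := by
    simpa using (norm_nonneg _).trans (hHolder 1 (by simp) 0 (by simp))
  set ρ : ℝ := (1 / 2 : ℝ) ^ α
  have hρ : 2 * ρ ^ 2 < 1 := by
    have : ρ ^ 2 < (1 / 2) ^ (1 : ℝ) := by
      rw [← Real.rpow_mul_natCast (by norm_num)]
      exact Real.rpow_lt_rpow_of_exponent_gt (by norm_num) (by norm_num) (by push_cast; linarith)
    linarith [Real.rpow_one (1 / 2 : ℝ)]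
  refine ⟨a, summable_of_sum_Ico_two_pow_sq_le (fun n => norm_nonneg _) (K := (C * (π / 2) ^ α) ^ 2)
    (by positivity) hρ fun m => ?_, fun z hz => (hf z hz).tsum_eq.symm⟩
  have hscale : (π / 2 ^ (m + 1)) ^ α = (π / 2) ^ α * ρ ^ m := by
    rw [pow_succ, div_mul_eq_div_div_swap, div_eq_mul_one_div _ ((2 : ℝ) ^ m), ← one_div_pow,
      Real.mul_rpow (by positivity) (by positivity), Real.rpow_pow_comm (by norm_num)]
  calc _ ≤ (C * (π / 2 ^ (m + 1)) ^ α) ^ 2 :=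
        sum_Ico_two_pow_sq_norm_le_of_holder (by linarith) hC hf
          (fun z hz w hw => hHolder z (ball_subset_closedBall hz) w (ball_subset_closedBall hw)) m
    _ = (C * (π / 2) ^ α) ^ 2 * (ρ ^ 2) ^ m := by rw [hscale]; ring

/-- (Bernstein) An analytic function on the unit disk, continuous on the closed disk and
Hölder of order `α > 1/2` there, has absolutely summable Taylor coefficients, i.e. lies in
the Wiener algebra `W⁺`. -/
theorem stmt14 (f : ℂ → ℂ) (α C : ℝ) (hα : 1 / 2 < α) (hα1 : α ≤ 1)
    (hd : DifferentiableOn ℂ f (Metric.ball 0 1))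
    (hc : ContinuousOn f (Metric.closedBall 0 1))
    (hHolder : ∀ z ∈ Metric.closedBall (0 : ℂ) 1, ∀ w ∈ Metric.closedBall (0 : ℂ) 1,
      ‖f z - f w‖ ≤ C * ‖z - w‖ ^ α) :
    ∃ a : ℕ → ℂ, Summable (fun n => ‖a n‖) ∧
      ∀ z ∈ Metric.ball (0 : ℂ) 1, f z = ∑' n : ℕ, a n * z ^ n :=
  stmt14_general f α C hα hd hc hHolder
end

section
/- Let E ⊂ 𝕋 and b ∈ ℓ¹ be such that f_b is a weak peak function for E: f_b = β on E with β ≠ 0 and sup_{|z|≤1}|f_b(z)| = |β|. Let ν be any Borel probability measure on 𝕋 with support contained in E such that ν̂(−j) = ∫ t^j dν(t) → 0 as j → ∞. Then the sequence y = (ν̂(−j))_{j≥0} belongs to the closed convex hull S₀ in c₀ of {(λ^j)_{j≥0} : λ ∈ 𝔻}, and |⟨b, y⟩| = sup_{x ∈ S₀} |⟨b, x⟩|; i.e., b attains its supremum of modulus over S₀ at y. -/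
/-!
Pairing with `b` is a continuous linear functional on `c₀`, and on the moment sequence
`(λ ^ j)` of a point `λ ∈ 𝔻` it takes the value `f_b(λ)`, of modulus at most `|β|`; hence
`|⟨b, x⟩| ≤ |β|` on all of `S₀`. Since `ν` lives on `E`, where `f_b = β`, integrating the power
series term by term gives `⟨b, y⟩ = ∫ f_b dν = β`. Finally `y ∈ S₀`: for `r < 1` the Abel
dilation `(r ^ j y_j)_j` is the Bochner integral `∫ (r t) ^ j dν(t)` of a continuous family of
points of `S₀`, hence lies in the closed convex set `S₀`, and it tends to `y` in `c₀` as `r → 1`.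
-/

open MeasureTheory Filter Topology Metric
open scoped ZeroAtInfty

theorem norm_pow_succ_sub_pow_succ_le {R : Type*} [SeminormedRing R] {a c : R} {r : ℝ}
    (ha : ‖a‖ ≤ r) (hc : ‖c‖ ≤ r) (n : ℕ) :
    ‖a ^ (n + 1) - c ^ (n + 1)‖ ≤ (n + 1) * r ^ n * ‖a - c‖ := by
  induction n with
  | zero => simp
  | succ n ih =>
    have hr : 0 ≤ r := (norm_nonneg a).trans ha
    have hcn : ‖c ^ (n + 1)‖ ≤ r ^ (n + 1) :=
      (norm_pow_le' c n.succ_pos).trans (pow_le_pow_left₀ (norm_nonneg c) hc _)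
    have hsplit : a ^ (n + 2) - c ^ (n + 2) =
        a * (a ^ (n + 1) - c ^ (n + 1)) + (a - c) * c ^ (n + 1) := by
      rw [pow_succ' a (n + 1), pow_succ' c (n + 1)]; noncomm_ring
    calc ‖a ^ (n + 2) - c ^ (n + 2)‖
        ≤ ‖a‖ * ‖a ^ (n + 1) - c ^ (n + 1)‖ + ‖a - c‖ * ‖c ^ (n + 1)‖ := by
          rw [hsplit]
          exact (norm_add_le _ _).trans (add_le_add (norm_mul_le _ _) (norm_mul_le _ _))
      _ ≤ r * ((n + 1) * r ^ n * ‖a - c‖) + ‖a - c‖ * r ^ (n + 1) := by gcongr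
      _ = (↑(n + 1) + 1) * r ^ (n + 1) * ‖a - c‖ := by push_cast; ring

namespace ZeroAtInftyContinuousMap

section Norm

variable {α E : Type*} [TopologicalSpace α] [NormedAddCommGroup E]

theorem norm_apply_le (f : C₀(α, E)) (x : α) : ‖f x‖ ≤ ‖f‖ := by
  rw [← norm_toBCF_eq_norm]
  exact f.toBCF.norm_coe_le_norm x

theorem norm_le_of_forall_le {f : C₀(α, E)} {C : ℝ} (hC : 0 ≤ C) (h : ∀ x, ‖f x‖ ≤ C) :
    ‖f‖ ≤ C := by
  rw [← norm_toBCF_eq_norm]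
  exact (BoundedContinuousFunction.norm_le hC).mpr h

variable (𝕜 : Type*) [NormedField 𝕜] [NormedSpace 𝕜 E]

noncomputable def evalCLM (x : α) : C₀(α, E) →L[𝕜] E :=
  LinearMap.mkContinuous
    { toFun := fun f => f x
      map_add' := fun _ _ => rfl
      map_smul' := fun _ _ => rfl } 1 (fun f => by simpa using norm_apply_le f x)

@[simp]
theorem evalCLM_apply (x : α) (f : C₀(α, E)) : evalCLM 𝕜 x f = f x := rfl

end Norm

section Sequence

variable {E : Type*} [NormedAddCommGroup E]

def ofTendsto (f : ℕ → E) (hf : Tendsto f atTop (𝓝 0)) : C₀(ℕ, E) where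
  toFun := f
  continuous_toFun := continuous_of_discreteTopology
  zero_at_infty' := by rwa [cocompact_eq_cofinite, Nat.cofinite_eq_atTop]

@[simp]
theorem coe_ofTendsto (f : ℕ → E) (hf : Tendsto f atTop (𝓝 0)) : ⇑(ofTendsto f hf) = f := rfl

theorem tendsto_atTop_zero (f : C₀(ℕ, E)) : Tendsto f atTop (𝓝 0) := by
  simpa [cocompact_eq_cofinite, Nat.cofinite_eq_atTop] using f.zero_at_infty'

end Sequence

section Geometric

variable {R : Type*} [NormedRing R]

/-- The geometric sequence `(l ^ j)_j`, with junk value `0` when `1 ≤ ‖l‖`. -/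
noncomputable def geometric (l : R) : C₀(ℕ, R) :=
  if h : ‖l‖ < 1 then ofTendsto (l ^ ·) (tendsto_pow_atTop_nhds_zero_of_norm_lt_one h) else 0

theorem geometric_apply {l : R} (h : ‖l‖ < 1) (j : ℕ) : geometric l j = l ^ j := by
  simp [geometric, h]

theorem image_geometric_ball :
    geometric '' ball (0 : R) 1 = {f | ∃ l : R, ‖l‖ < 1 ∧ ∀ j, f j = l ^ j} := by
  ext f
  simp only [Set.mem_image, mem_ball_zero_iff, Set.mem_ofPred_eq]
  refine ⟨?_, fun ⟨l, hl, hf⟩ => ⟨l, hl, ext fun j => by rw [geometric_apply hl, hf]⟩⟩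
  rintro ⟨l, hl, rfl⟩
  exact ⟨l, hl, geometric_apply hl⟩

theorem exists_lipschitzOnWith_geometric {r : ℝ} (hr₀ : 0 ≤ r) (hr₁ : r < 1) :
    ∃ K, LipschitzOnWith K geometric (closedBall (0 : R) r) := by
  have hlim : Tendsto (fun n : ℕ => (n + 1) * r ^ n) atTop (𝓝 0) := by
    simpa [add_mul] using (tendsto_self_mul_const_pow_of_lt_one hr₀ hr₁).add
      (tendsto_pow_atTop_nhds_zero_of_lt_one hr₀ hr₁)
  obtain ⟨C, hC⟩ := hlim.bddAbove_range
  refine ⟨C.toNNReal, LipschitzOnWith.of_dist_le_mul fun a ha c hc => ?_⟩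
  rw [mem_closedBall_zero_iff] at ha hc
  rw [dist_eq_norm, dist_eq_norm]
  refine norm_le_of_forall_le (by positivity) fun j => ?_
  rw [sub_apply, geometric_apply (ha.trans_lt hr₁), geometric_apply (hc.trans_lt hr₁)]
  cases j with
  | zero => simp only [pow_zero, sub_self, norm_zero]; positivity
  | succ n =>
    calc ‖a ^ (n + 1) - c ^ (n + 1)‖ ≤ (n + 1) * r ^ n * ‖a - c‖ :=
          norm_pow_succ_sub_pow_succ_le ha hc n
      _ ≤ C.toNNReal * ‖a - c‖ := by
          gcongr
          exact (hC ⟨n, rfl⟩).trans (Real.le_coe_toNNReal C)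

theorem continuousOn_geometric : ContinuousOn (geometric (R := R)) (ball 0 1) := by
  intro l hl
  rw [mem_ball_zero_iff] at hl
  obtain ⟨r, hlr, hr₁⟩ := exists_between hl
  obtain ⟨K, hK⟩ := exists_lipschitzOnWith_geometric (R := R) ((norm_nonneg l).trans hlr.le) hr₁
  exact (hK.continuousOn.continuousAt (closedBall_mem_nhds_of_mem (by simpa using hlr)))
    |>.continuousWithinAt

end Geometric

section Pairing

variable {𝕜 : Type*} [NormedField 𝕜]

theorem summable_mul_of_summable_norm (b : ℕ → 𝕜) (hb : Summable fun n => ‖b n‖)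
    (x : C₀(ℕ, 𝕜)) : Summable fun n => ‖x n * b n‖ :=
  .of_nonneg_of_le (fun _ => norm_nonneg _)
    (fun n => by rw [norm_mul]; gcongr; exact norm_apply_le x n) (hb.mul_left ‖x‖)

variable [CompleteSpace 𝕜]

noncomputable def pairing (b : ℕ → 𝕜) (hb : Summable fun n => ‖b n‖) : C₀(ℕ, 𝕜) →L[𝕜] 𝕜 :=
  LinearMap.mkContinuous
    { toFun := fun x => ∑' n, x n * b n
      map_add' := fun x y => by
        simp only [add_apply, add_mul]
        exact (summable_mul_of_summable_norm b hb x).of_norm.tsum_add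
          (summable_mul_of_summable_norm b hb y).of_norm
      map_smul' := fun c x => by
        simp only [smul_apply, smul_eq_mul, mul_assoc, RingHom.id_apply]
        exact tsum_mul_left }
    (∑' n, ‖b n‖) fun x => by
      calc ‖∑' n, x n * b n‖ ≤ ∑' n, ‖x n * b n‖ :=
            norm_tsum_le_tsum_norm (summable_mul_of_summable_norm b hb x)
        _ ≤ ∑' n, ‖x‖ * ‖b n‖ :=
            (summable_mul_of_summable_norm b hb x).tsum_le_tsum
              (fun n => by rw [norm_mul]; gcongr; exact norm_apply_le x n) (hb.mul_left ‖x‖)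
        _ = (∑' n, ‖b n‖) * ‖x‖ := by rw [tsum_mul_left, mul_comm]

theorem pairing_apply (b : ℕ → 𝕜) (hb : Summable fun n => ‖b n‖) (x : C₀(ℕ, 𝕜)) :
    pairing b hb x = ∑' n, x n * b n := rfl

end Pairing

theorem tendsto_geometric_mul_nhds_self (y : C₀(ℕ, ℂ)) :
    Tendsto (fun r : ℝ => geometric (r : ℂ) * y) (𝓝[<] 1) (𝓝 y) := by
  rw [Metric.tendsto_nhds]
  intro ε hε
  obtain ⟨J, hJ⟩ := Metric.tendsto_atTop.mp y.tendsto_atTop_zero (ε / 2) (half_pos hε)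
  have hhead : ∀ᶠ r : ℝ in 𝓝 1, (1 - r ^ J) * ‖y‖ < ε / 2 := by
    have : Continuous fun r : ℝ => (1 - r ^ J) * ‖y‖ := by fun_prop
    exact this.continuousAt.eventually_lt continuousAt_const (by simpa using half_pos hε)
  filter_upwards [self_mem_nhdsWithin, nhdsWithin_le_nhds (hhead.and (lt_mem_nhds one_pos))]
    with r (hr₁ : r < 1) ⟨hhead, hr₀⟩
  have hr : ‖(r : ℂ)‖ < 1 := by rwa [Complex.norm_real, Real.norm_of_nonneg hr₀.le]
  refine lt_of_le_of_lt ?_ (half_lt_self hε)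
  rw [dist_eq_norm]
  refine norm_le_of_forall_le (half_pos hε).le fun j => ?_
  have hcoord : ‖(geometric (r : ℂ) * y - y) j‖ = (1 - r ^ j) * ‖y j‖ := by
    rw [sub_apply, mul_apply, geometric_apply hr, ← sub_one_mul, norm_mul, ← Complex.ofReal_pow,
      ← Complex.ofReal_one, ← Complex.ofReal_sub, Complex.norm_real, Real.norm_of_nonpos
        (by linarith [pow_le_one₀ hr₀.le hr₁.le (n := j)]), neg_sub]
  rw [hcoord]
  -- the tail of `y` is small, and on the head `1 - r ^ j ≤ 1 - r ^ J`
  rcases le_or_gt J j with hJj | hjJ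
  · calc (1 - r ^ j) * ‖y j‖ ≤ 1 * ‖y j‖ := by gcongr; linarith [pow_nonneg hr₀.le j]
      _ ≤ ε / 2 := by simpa using (hJ j hJj).le
  · calc (1 - r ^ j) * ‖y j‖ ≤ (1 - r ^ J) * ‖y‖ :=
          mul_le_mul (by linarith [pow_le_pow_of_le_one hr₀.le hr₁.le hjJ.le])
            (norm_apply_le y j) (norm_nonneg _) (by linarith [pow_le_one₀ hr₀.le hr₁.le (n := J)])
      _ ≤ ε / 2 := hhead.le

section Moments

variable {μ : Measure ℂ}

theorem norm_ofReal_mul_lt_one {r : ℝ} (hr₀ : 0 ≤ r) (hr₁ : r < 1) {t : ℂ} (ht : ‖t‖ ≤ 1) :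
    ‖(r : ℂ) * t‖ < 1 := by
  rw [norm_mul, Complex.norm_real, Real.norm_of_nonneg hr₀]
  nlinarith [norm_nonneg t]

theorem integrable_geometric_ofReal_mul [IsFiniteMeasure μ] (hμ : ∀ᵐ t ∂μ, ‖t‖ ≤ 1) {r : ℝ}
    (hr₀ : 0 ≤ r) (hr₁ : r < 1) : Integrable (fun t => geometric ((r : ℂ) * t)) μ := by
  have hcont : ContinuousOn (fun t => geometric ((r : ℂ) * t)) (closedBall 0 1) :=
    continuousOn_geometric.comp (by fun_prop) fun t ht =>
      mem_ball_zero_iff.2 (norm_ofReal_mul_lt_one hr₀ hr₁ (mem_closedBall_zero_iff.1 ht))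
  have hμ' : ∀ᵐ t ∂μ, t ∈ closedBall (0 : ℂ) 1 := by simpa using hμ
  refine ⟨?_, HasFiniteIntegral.of_bounded (C := 1) ?_⟩
  · simpa [Measure.restrict_eq_self_of_ae_mem hμ'] using
      hcont.aestronglyMeasurable (μ := μ) isClosed_closedBall.measurableSet
  · filter_upwards [hμ] with t ht
    have h := norm_ofReal_mul_lt_one hr₀ hr₁ ht
    refine norm_le_of_forall_le zero_le_one fun j => ?_
    rw [geometric_apply h, norm_pow]
    exact pow_le_one₀ (norm_nonneg _) h.le

theorem integral_geometric_ofReal_mul [IsFiniteMeasure μ] (hμ : ∀ᵐ t ∂μ, ‖t‖ ≤ 1) {r : ℝ}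
    (hr₀ : 0 ≤ r) (hr₁ : r < 1) (j : ℕ) :
    (∫ t, geometric ((r : ℂ) * t) ∂μ) j = r ^ j * ∫ t, t ^ j ∂μ := by
  rw [← evalCLM_apply ℂ, ← (evalCLM ℂ j).integral_comp_comm
    (integrable_geometric_ofReal_mul hμ hr₀ hr₁), ← integral_const_mul]
  refine integral_congr_ae ?_
  filter_upwards [hμ] with t ht
  rw [evalCLM_apply, geometric_apply (norm_ofReal_mul_lt_one hr₀ hr₁ ht), mul_pow]

theorem moments_mem_closure_convexHull [IsProbabilityMeasure μ] (hμ : ∀ᵐ t ∂μ, ‖t‖ ≤ 1)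
    (y : C₀(ℕ, ℂ)) (hy : ∀ j, y j = ∫ t, t ^ j ∂μ) :
    y ∈ closure (convexHull ℝ (geometric '' ball 0 1)) := by
  refine isClosed_closure.mem_of_tendsto (tendsto_geometric_mul_nhds_self y) ?_
  filter_upwards [self_mem_nhdsWithin, nhdsWithin_le_nhds (lt_mem_nhds one_pos)]
    with r (hr₁ : r < 1) (hr₀ : 0 < r)
  have hdilate : geometric (r : ℂ) * y = ∫ t, geometric ((r : ℂ) * t) ∂μ := by
    ext j
    rw [integral_geometric_ofReal_mul hμ hr₀.le hr₁, mul_apply, hy, geometric_apply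
      (by rwa [Complex.norm_real, Real.norm_of_nonneg hr₀.le])]
  rw [hdilate]
  refine (convex_convexHull ℝ _).closure.integral_mem isClosed_closure ?_
    (integrable_geometric_ofReal_mul hμ hr₀.le hr₁)
  filter_upwards [hμ] with t ht
  exact subset_closure (subset_convexHull ℝ _
    ⟨_, mem_ball_zero_iff.2 (norm_ofReal_mul_lt_one hr₀.le hr₁ ht), rfl⟩)

variable [IsFiniteMeasure μ]

theorem tsum_integral_pow_mul_eq_integral_tsum (hμ : ∀ᵐ t ∂μ, ‖t‖ ≤ 1) (b : ℕ → ℂ)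
    (hb : Summable fun n => ‖b n‖) :
    ∑' n, (∫ t, t ^ n ∂μ) * b n = ∫ t, ∑' n, b n * t ^ n ∂μ := by
  have hbound : ∀ n, ∀ᵐ t ∂μ, ‖b n * t ^ n‖ ≤ ‖b n‖ := fun n => by
    filter_upwards [hμ] with t ht
    rw [norm_mul, norm_pow]
    exact mul_le_of_le_one_right (norm_nonneg _) (pow_le_one₀ (norm_nonneg _) ht)
  have hint : ∀ n, Integrable (fun t : ℂ => b n * t ^ n) μ := fun n =>
    ⟨by fun_prop, HasFiniteIntegral.of_bounded (hbound n)⟩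
  simp_rw [← integral_mul_const, mul_comm _ (b _)]
  refine integral_tsum_of_summable_integral_norm hint ?_
  refine .of_nonneg_of_le (fun n => integral_nonneg fun _ => norm_nonneg _) (fun n => ?_)
    (hb.mul_right (μ.real Set.univ))
  calc ∫ t, ‖b n * t ^ n‖ ∂μ ≤ ∫ _, ‖b n‖ ∂μ :=
        integral_mono_ae (hint n).norm (integrable_const _) (hbound n)
    _ = ‖b n‖ * μ.real Set.univ := by rw [integral_const, smul_eq_mul, mul_comm]

end Moments

end ZeroAtInftyContinuousMap

theorem norm_le_of_mem_closure_convexHull {E F : Type*} [NormedAddCommGroup E] [NormedSpace ℝ E]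
    [NormedAddCommGroup F] [NormedSpace ℝ F] (T : E →L[ℝ] F) {s : Set E} {c : ℝ}
    (h : ∀ x ∈ s, ‖T x‖ ≤ c) {x : E} (hx : x ∈ closure (convexHull ℝ s)) : ‖T x‖ ≤ c := by
  have hK : s ⊆ T ⁻¹' closedBall 0 c := fun x hx => mem_closedBall_zero_iff.2 (h x hx)
  simpa using closure_minimal
    (convexHull_min hK ((convex_closedBall 0 c).linear_preimage T.toLinearMap))
    (isClosed_closedBall.preimage T.continuous) hx

open ZeroAtInftyContinuousMap

theorem stmt15_general (b : ℕ → ℂ) (hb : Summable fun n => ‖b n‖)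
    (fb : ℂ → ℂ) (hfb : ∀ z, fb z = ∑' n : ℕ, b n * z ^ n)
    (E : Set ℂ) (hE : E ⊆ Metric.sphere 0 1)
    (β : ℂ)
    (hpeak : ∀ t ∈ E, fb t = β)
    (hsup : ∀ z : ℂ, ‖z‖ ≤ 1 → ‖fb z‖ ≤ ‖β‖)
    (ν : Measure ℂ) [IsProbabilityMeasure ν] (hν : ν Eᶜ = 0)
    (hRaj : Filter.Tendsto (fun j : ℕ => ∫ t, t ^ j ∂ν) Filter.atTop (nhds 0))
    (Φ : Set (ZeroAtInftyContinuousMap ℕ ℂ))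
    (hΦ : Φ = {f | ∃ l : ℂ, ‖l‖ < 1 ∧ ∀ j, f j = l ^ j})
    (S₀ : Set (ZeroAtInftyContinuousMap ℕ ℂ)) (hS₀ : S₀ = closure (convexHull ℝ Φ)) :
    ∃ y : ZeroAtInftyContinuousMap ℕ ℂ,
      (∀ j : ℕ, y j = ∫ t, t ^ j ∂ν) ∧ y ∈ S₀ ∧
      ‖∑' n : ℕ, y n * b n‖ =
        ⨆ x : S₀, ‖∑' n : ℕ, (x : ZeroAtInftyContinuousMap ℕ ℂ) n * b n‖ := by
  have hΦ_eq : Φ = geometric '' ball 0 1 := hΦ ▸ image_geometric_ball.symm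
  have hνE : ∀ᵐ t ∂ν, t ∈ E := mem_ae_iff.2 hν
  have hν₁ : ∀ᵐ t ∂ν, ‖t‖ ≤ 1 := hνE.mono fun t ht => (mem_sphere_zero_iff_norm.1 (hE ht)).le
  set y := ofTendsto _ hRaj
  have hy : y ∈ S₀ := hS₀ ▸ hΦ_eq ▸ moments_mem_closure_convexHull hν₁ y fun _ => rfl
  have hpair_y : pairing b hb y = β := by
    rw [pairing_apply, coe_ofTendsto, tsum_integral_pow_mul_eq_integral_tsum hν₁ b hb,
      integral_congr_ae (hνE.mono fun t ht => (hfb t).symm.trans (hpeak t ht))]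
    simp
  have hpair_le : ∀ x ∈ S₀, ‖pairing b hb x‖ ≤ ‖β‖ := by
    rw [hS₀, hΦ_eq]
    refine fun x hx => norm_le_of_mem_closure_convexHull ((pairing b hb).restrictScalars ℝ) ?_ hx
    rintro _ ⟨l, hl, rfl⟩
    rw [mem_ball_zero_iff] at hl
    simpa [pairing_apply, geometric_apply hl, hfb, mul_comm] using hsup l hl.le
  refine ⟨y, fun _ => rfl, hy, ?_⟩
  have : Nonempty S₀ := ⟨⟨y, hy⟩⟩
  simp only [← pairing_apply b hb, hpair_y]
  exact (ciSup_eq_of_forall_le_of_forall_lt_exists_gt (fun x : S₀ => hpair_le x x.2)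
    fun w hw => ⟨(⟨y, hy⟩ : S₀), hpair_y ▸ hw⟩).symm

/-- If `f_b` is a weak peak function for `E ⊆ 𝕋` and `ν` is a Rajchman probability
measure supported in `E`, then `y = (ν̂(-j))_j` lies in `S₀` and `b` attains its supremum
of modulus over `S₀` at `y`. -/
theorem stmt15 (b : ℕ → ℂ) (hb : Summable fun n => ‖b n‖)
    (fb : ℂ → ℂ) (hfb : ∀ z, fb z = ∑' n : ℕ, b n * z ^ n)
    (E : Set ℂ) (hE : E ⊆ Metric.sphere 0 1)
    (β : ℂ) (hβ : β ≠ 0)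
    (hpeak : ∀ t ∈ E, fb t = β)
    (hsup : ∀ z : ℂ, ‖z‖ ≤ 1 → ‖fb z‖ ≤ ‖β‖)
    (ν : Measure ℂ) [IsProbabilityMeasure ν] (hν : ν Eᶜ = 0)
    (hRaj : Filter.Tendsto (fun j : ℕ => ∫ t, t ^ j ∂ν) Filter.atTop (nhds 0))
    (Φ : Set (ZeroAtInftyContinuousMap ℕ ℂ))
    (hΦ : Φ = {f | ∃ l : ℂ, ‖l‖ < 1 ∧ ∀ j, f j = l ^ j})
    (S₀ : Set (ZeroAtInftyContinuousMap ℕ ℂ)) (hS₀ : S₀ = closure (convexHull ℝ Φ)) :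
    ∃ y : ZeroAtInftyContinuousMap ℕ ℂ,
      (∀ j : ℕ, y j = ∫ t, t ^ j ∂ν) ∧ y ∈ S₀ ∧
      ‖∑' n : ℕ, y n * b n‖ =
        ⨆ x : S₀, ‖∑' n : ℕ, (x : ZeroAtInftyContinuousMap ℕ ℂ) n * b n‖ :=
  stmt15_general b hb fb hfb E hE β hpeak hsup ν hν hRaj Φ hΦ S₀ hS₀
end
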